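/- arXiv:1701.02200 — 10 statements merged into one kernel-verified Lean document; each statement's English description precedes it below -/
import Mathlib

section
/- Let B and R = {p_1, …, p_n} be two finite sets of points in the Euclidean plane ℝ², with the points p_1, …, p_n pairwise distinct, and for each i let D_i be the closed Euclidean disk of radius ρ_i > 0 centered at p_i. If for every i the number of points of B in D_i is at least the number of points of R in D_i (i.e., |D_i ∩ B| ≥ |D_i ∩ R| for all i), then 5·|B| ≥ n, i.e., the total number of blue points is at least one fifth of the total number of red points. -/
/-!
Process the disks by decreasing radius, keeping a disk whenever its centre is not covered by a
disk kept before. The kept disks `D_j` cover every red point, and any two kept centres are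
farther apart than both radii. A blue point `b` lying in two kept disks therefore sees their
centres `x, y` with `max |b - x| |b - y| < |x - y|`, so by the law of cosines under an angle
greater than `π / 3`; hence `b` lies in at most five kept disks. Summing
`|D_j ∩ R| ≤ |D_j ∩ B|` over the kept disks gives `n ≤ 5 |B|`.
-/

open Real Metric

lemma one_half_le_cos_of_abs_le {t : ℝ} (ht : |t| ≤ π / 3) : 1 / 2 ≤ cos t := by
  rw [← cos_abs, ← cos_pi_div_three]
  exact cos_le_cos_of_nonneg_of_le_pi (abs_nonneg t) (by linarith [pi_pos]) ht

lemma one_half_lt_cos_of_abs_lt {t : ℝ} (ht : |t| < π / 3) : 1 / 2 < cos t := by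
  rw [← cos_abs, ← cos_pi_div_three]
  exact cos_lt_cos_of_nonneg_of_le_pi (abs_nonneg t) (by linarith [pi_pos]) ht

lemma mem_Ioo_of_cos_lt_one_half {φ : ℝ} (hφ : φ ∈ Set.Ico 0 (2 * π)) (h : cos φ < 1 / 2) :
    φ ∈ Set.Ioo (π / 3) (5 * π / 3) := by
  obtain ⟨h0, h2π⟩ := hφ
  constructor
  · by_contra! hle
    exact h.not_ge (one_half_le_cos_of_abs_le (abs_le.mpr ⟨by linarith [pi_pos], hle⟩))
  · by_contra! hge
    rw [← cos_sub_two_pi] at h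
    exact h.not_ge (one_half_le_cos_of_abs_le (abs_le.mpr ⟨by linarith, by linarith⟩))

lemma cos_toIcoMod_sub_toIcoMod (x y : ℝ) :
    cos (toIcoMod two_pi_pos 0 x - toIcoMod two_pi_pos 0 y) = cos (x - y) := by
  have hx := self_sub_toIcoMod_eq_mul two_pi_pos 0 x
  have hy := self_sub_toIcoMod_eq_mul two_pi_pos 0 y
  have : toIcoMod two_pi_pos 0 x - toIcoMod two_pi_pos 0 y
      = (x - y) - ((toIcoDiv two_pi_pos 0 x - toIcoDiv two_pi_pos 0 y : ℤ) : ℝ) * (2 * π) := by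
    push_cast; linarith
  rw [this, cos_sub_int_mul_two_pi]

theorem Finset.card_le_five_of_pairwise_cos_sub_lt {ι : Type*} (s : Finset ι) (θ : ι → ℝ)
    (h : (s : Set ι).Pairwise fun i j => cos (θ i - θ j) < 1 / 2) : s.card ≤ 5 := by
  classical
  -- Measured from `θ i₀` and reduced to `[0, 2π)`, the other angles lie in `(π/3, 5π/3)`,
  -- so if there are five of them, two fall into the same bin of width `π/3`.
  by_contra! hs
  obtain ⟨i₀, hi₀⟩ : s.Nonempty := Finset.card_pos.mp (by omega)
  set φ : ι → ℝ := fun j => toIcoMod two_pi_pos 0 (θ j - θ i₀)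
  have hφ : ∀ j k, cos (φ j - φ k) = cos (θ j - θ k) := fun j k => by
    simp only [φ, cos_toIcoMod_sub_toIcoMod, sub_sub_sub_cancel_right]
  have hbin : ∀ j ∈ s.erase i₀, ⌊φ j / (π / 3)⌋ ∈ Finset.Icc (1 : ℤ) 4 := by
    intro j hj
    have hcos : cos (φ j) < 1 / 2 := by
      have hφ₀ : φ i₀ = 0 := by
        simp only [φ, sub_self, toIcoMod_apply_left]
      rw [← sub_zero (φ j), ← hφ₀, hφ]
      exact h (Finset.mem_of_mem_erase hj) hi₀ (Finset.ne_of_mem_erase hj)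
    obtain ⟨hlo, hhi⟩ := mem_Ioo_of_cos_lt_one_half (toIcoMod_mem_Ico' two_pi_pos _) hcos
    have hpi : 0 < π / 3 := by positivity
    rw [Finset.mem_Icc, Int.le_floor, ← Int.lt_add_one_iff, Int.floor_lt]
    push_cast
    constructor
    · rw [le_div_iff₀ hpi]; linarith
    · rw [div_lt_iff₀ hpi]; linarith
  obtain ⟨j, hj, k, hk, hjk, hfloor⟩ := Finset.exists_ne_map_eq_of_card_lt_of_maps_to
    (by rw [Finset.card_erase_of_mem hi₀]; simp; omega) hbin
  have hclose : |φ j - φ k| < π / 3 := by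
    have := Int.abs_sub_lt_one_of_floor_eq_floor hfloor
    rwa [← sub_div, abs_div, abs_of_pos (a := π / 3) (by positivity),
      div_lt_one (by positivity)] at this
  have hfar : cos (φ j - φ k) < 1 / 2 :=
    hφ j k ▸ h (Finset.mem_of_mem_erase hj) (Finset.mem_of_mem_erase hk) hjk
  exact hfar.not_gt (one_half_lt_cos_of_abs_lt hclose)

theorem Complex.cos_arg_sub_arg_lt_one_half {u v : ℂ} (hu : u ≠ 0) (hv : v ≠ 0)
    (h : max ‖u‖ ‖v‖ < ‖u - v‖) : Real.cos (u.arg - v.arg) < 1 / 2 := by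
  have hu' : 0 < ‖u‖ := norm_pos_iff.mpr hu
  have hv' : 0 < ‖v‖ := norm_pos_iff.mpr hv
  have hinner : ‖u‖ * ‖v‖ * Real.cos (u.arg - v.arg) = u.re * v.re + u.im * v.im := by
    rw [Real.cos_sub, Complex.cos_arg hu, Complex.cos_arg hv, Complex.sin_arg, Complex.sin_arg]
    field_simp
  have hcosines : ‖u - v‖ ^ 2 = ‖u‖ ^ 2 + ‖v‖ ^ 2 - 2 * (u.re * v.re + u.im * v.im) := by
    simp only [Complex.sq_norm, Complex.normSq_apply, Complex.sub_re, Complex.sub_im]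
    ring
  have hsq : max ‖u‖ ‖v‖ ^ 2 < ‖u - v‖ ^ 2 := by gcongr
  rw [hcosines, ← hinner] at hsq
  rcases le_total ‖u‖ ‖v‖ with hle | hle
  · rw [max_eq_right hle] at hsq
    nlinarith [mul_pos hu' hv']
  · rw [max_eq_left hle] at hsq
    nlinarith [mul_pos hu' hv']

theorem card_le_five_of_pairwise_max_dist_lt {V : Type*} [NormedAddCommGroup V]
    [InnerProductSpace ℝ V] (hV : Module.finrank ℝ V = 2) (b : V) (s : Finset V)
    (hs : (s : Set V).Pairwise fun x y => max (dist b x) (dist b y) < dist x y) :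
    s.card ≤ 5 := by
  have : FiniteDimensional ℝ V := Module.finite_of_finrank_eq_succ hV
  let e : V ≃ₗᵢ[ℝ] ℂ :=
    (Complex.isometryOfOrthonormal ((stdOrthonormalBasis ℝ V).reindex (finCongr hV))).symm
  refine s.card_le_five_of_pairwise_cos_sub_lt (fun x => (e x - e b).arg) fun x hx y hy hxy => ?_
  have hsep : max (dist b x) (dist b y) < dist x y := hs hx hy hxy
  have hxb : x ≠ b := by rintro rfl; simp [dist_nonneg] at hsep
  have hyb : y ≠ b := by rintro rfl; simp [dist_nonneg, dist_comm] at hsep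
  rw [dist_comm b x, dist_comm b y, ← e.dist_map, ← e.dist_map, ← e.dist_map,
    dist_eq_norm, dist_eq_norm, dist_eq_norm, ← sub_sub_sub_cancel_right (e x) (e y) (e b)] at hsep
  exact Complex.cos_arg_sub_arg_lt_one_half (sub_ne_zero.mpr (e.injective.ne hxb))
    (sub_ne_zero.mpr (e.injective.ne hyb)) hsep

theorem exists_subset_covering_pairwise_max_lt_dist {ι X : Type*} [PseudoMetricSpace X]
    (p : ι → X) (ρ : ι → ℝ) (hρ : ∀ i, 0 ≤ ρ i) (S : Finset ι) :
    ∃ T ⊆ S, (∀ i ∈ S, ∃ j ∈ T, dist (p i) (p j) ≤ ρ j) ∧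
      (T : Set ι).Pairwise fun j k => max (ρ j) (ρ k) < dist (p j) (p k) := by
  classical
  induction S using Finset.strongInduction with
  | H S ih =>
  rcases S.eq_empty_or_nonempty with rfl | hS
  · exact ⟨∅, subset_rfl, by simp, by simp⟩
  obtain ⟨j, hjS, hjmax⟩ := S.exists_max_image ρ hS
  set S' := S.filter fun i => ρ j < dist (p i) (p j)
  have hjS' : j ∉ S' := by simp [S', hρ j]
  obtain ⟨T, hTS', hcover, hsep⟩ :=
    ih S' (Finset.ssubset_iff_subset_ne.mpr ⟨Finset.filter_subset _ _, fun h => hjS' (h ▸ hjS)⟩)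
  refine ⟨insert j T, Finset.insert_subset hjS (hTS'.trans (Finset.filter_subset _ _)),
    fun i hi => ?_, ?_⟩
  · by_cases hij : dist (p i) (p j) ≤ ρ j
    · exact ⟨j, Finset.mem_insert_self _ _, hij⟩
    · obtain ⟨k, hk, hik⟩ := hcover i (Finset.mem_filter.mpr ⟨hi, not_le.mp hij⟩)
      exact ⟨k, Finset.mem_insert_of_mem hk, hik⟩
  · have : Std.Symm fun j k => max (ρ j) (ρ k) < dist (p j) (p k) :=
      ⟨fun a b h => by rwa [max_comm, dist_comm]⟩
    rw [Finset.coe_insert, Set.pairwise_insert_of_symm]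
    refine ⟨hsep, fun k hk _ => ?_⟩
    obtain ⟨hkS, hfar⟩ := Finset.mem_filter.mp (hTS' hk)
    rw [max_eq_left (hjmax k hkS), dist_comm]
    exact hfar

theorem card_filter_dist_le_le_of_pairwise {ι X : Type*} [PseudoMetricSpace X] {k : ℕ}
    (hX : ∀ (b : X) (s : Finset X),
      (s : Set X).Pairwise (fun x y => max (dist b x) (dist b y) < dist x y) → s.card ≤ k)
    (p : ι → X) (ρ : ι → ℝ) (hρ : ∀ i, 0 ≤ ρ i) (T : Finset ι)
    (hT : (T : Set ι).Pairwise fun j k => max (ρ j) (ρ k) < dist (p j) (p k)) (b : X) :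
    (T.filter fun j => dist b (p j) ≤ ρ j).card ≤ k := by
  classical
  set T' := T.filter fun j => dist b (p j) ≤ ρ j
  have hT' : (T' : Set ι).Pairwise fun j k => max (ρ j) (ρ k) < dist (p j) (p k) :=
    hT.mono (Finset.coe_subset.mpr (Finset.filter_subset _ _))
  have hinj : Set.InjOn p T' := fun j hj k hk hjk => by
    by_contra hne
    have : max (ρ j) (ρ k) < dist (p j) (p k) := hT' hj hk hne
    rw [hjk, dist_self] at this
    exact this.not_ge (le_max_of_le_left (hρ j))
  rw [← Finset.card_image_of_injOn hinj]
  refine hX b _ ?_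
  rw [Finset.coe_image]
  rintro _ ⟨j, hj, rfl⟩ _ ⟨l, hl, rfl⟩ hne
  have hjb := (Finset.mem_filter.mp hj).2
  have hlb := (Finset.mem_filter.mp hl).2
  exact (max_le_max (dist_comm b (p j) ▸ hjb) (dist_comm b (p l) ▸ hlb)).trans_lt
    (hT' hj hl fun h => hne (h ▸ rfl))

theorem card_filter_eq_le_ncard_range_inter_closedBall {ι X : Type*} [Fintype ι]
    [DecidableEq ι] [PseudoMetricSpace X] (p : ι → X) (hp : Function.Injective p) (ρ : ι → ℝ)
    (f : ι → ι) (hf : ∀ i, dist (p i) (p (f i)) ≤ ρ (f i)) (j : ι) :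
    (Finset.univ.filter fun i => f i = j).card ≤ (Set.range p ∩ closedBall (p j) (ρ j)).ncard := by
  classical
  rw [← Finset.card_image_of_injective _ hp, ← Set.ncard_coe_finset]
  refine Set.ncard_le_ncard ?_ ((Set.finite_range p).inter_of_left _)
  intro x hx
  obtain ⟨i, hi, rfl⟩ := Finset.mem_image.mp hx
  exact ⟨Set.mem_range_self i, (Finset.mem_filter.mp hi).2 ▸ hf i⟩

theorem card_le_mul_ncard_of_forall_ncard_inter_closedBall_le {ι X : Type*} [Fintype ι]
    [PseudoMetricSpace X] {k : ℕ}
    (hX : ∀ (b : X) (s : Finset X),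
      (s : Set X).Pairwise (fun x y => max (dist b x) (dist b y) < dist x y) → s.card ≤ k)
    (p : ι → X) (hp : Function.Injective p) (ρ : ι → ℝ) (hρ : ∀ i, 0 ≤ ρ i)
    (B : Set X) (hB : B.Finite)
    (h : ∀ i, (Set.range p ∩ closedBall (p i) (ρ i)).ncard ≤ (B ∩ closedBall (p i) (ρ i)).ncard) :
    Fintype.card ι ≤ k * B.ncard := by
  classical
  obtain ⟨T, -, hcover, hsep⟩ :=
    exists_subset_covering_pairwise_max_lt_dist p ρ hρ Finset.univ
  choose f hfT hf using fun i => hcover i (Finset.mem_univ i)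
  have hred : ∀ j, (Finset.univ.filter fun i => f i = j).card ≤
      (hB.toFinset.filter fun b => dist b (p j) ≤ ρ j).card := fun j => by
    have hblue :
        B ∩ closedBall (p j) (ρ j) = ↑(hB.toFinset.filter fun b => dist b (p j) ≤ ρ j) := by
      ext b
      simp [mem_closedBall]
    exact (card_filter_eq_le_ncard_range_inter_closedBall p hp ρ f hf j).trans
      ((h j).trans_eq (by rw [hblue, Set.ncard_coe_finset]))
  calc Fintype.card ι = ∑ j ∈ T, (Finset.univ.filter fun i => f i = j).card :=
        Finset.card_eq_sum_card_fiberwise fun i _ => hfT i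
    _ ≤ ∑ j ∈ T, (hB.toFinset.filter fun b => dist b (p j) ≤ ρ j).card :=
        Finset.sum_le_sum fun j _ => hred j
    _ = ∑ b ∈ hB.toFinset, (T.filter fun j => dist b (p j) ≤ ρ j).card :=
        Finset.sum_card_bipartiteAbove_eq_sum_card_bipartiteBelow _
    _ ≤ ∑ _b ∈ hB.toFinset, k :=
        Finset.sum_le_sum fun b _ => card_filter_dist_le_le_of_pairwise hX p ρ hρ T hsep b
    _ = k * B.ncard := by
        rw [Finset.sum_const, smul_eq_mul, mul_comm, Set.ncard_eq_toFinset_card B hB]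

/-- Local-to-global theorem in the Euclidean plane: if in each disk `D i`
(centered at the red point `p i`, radius `ρ i > 0`) there are at least as many
blue points as red points, then `5 * |B| ≥ n`. -/
theorem stmt_0 {n : ℕ} (p : Fin n → EuclideanSpace ℝ (Fin 2))
    (hp : Function.Injective p) (ρ : Fin n → ℝ) (hρ : ∀ i, 0 < ρ i)
    (B : Set (EuclideanSpace ℝ (Fin 2))) (hB : B.Finite)
    (h : ∀ i, (Set.range p ∩ Metric.closedBall (p i) (ρ i)).ncard ≤
              (B ∩ Metric.closedBall (p i) (ρ i)).ncard) :
    n ≤ 5 * B.ncard := by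
  simpa using card_le_mul_ncard_of_forall_ncard_inter_closedBall_le
    (card_le_five_of_pairwise_max_dist_lt finrank_euclideanSpace_fin) p hp ρ (fun i => (hρ i).le)
    B hB h
end

section
/- The constant 1/5 in the planar local-to-global theorem is optimal: there exist a set R of 5 pairwise distinct points in the Euclidean plane ℝ² and a point b ∈ ℝ² such that for every p ∈ R the closed Euclidean disk of radius 1 centered at p contains b and contains no point of R other than p itself. Consequently, with B = {b}, every disk D_p satisfies |D_p ∩ B| ≥ |D_p ∩ R| while |B| = |R|/5. (Such a configuration is given by the vertices of a regular pentagon with circumradius 1 and its center b.) -/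
/-! Take the vertices of a regular pentagon inscribed in the unit circle and its center `b = 0`.
Distinct vertices subtend an angle in `[2π/5, 8π/5] ⊂ (π/3, 5π/3)` at the center, so their
chord `√(2 - 2 cos θ)` exceeds the chord `1` of the angle `π/3`. -/

open Real

noncomputable def unitCirclePoint (θ : ℝ) : EuclideanSpace ℝ (Fin 2) := !₂[cos θ, sin θ]

lemma norm_unitCirclePoint (θ : ℝ) : ‖unitCirclePoint θ‖ = 1 := by
  rw [EuclideanSpace.norm_eq, Fin.sum_univ_two]
  simp [unitCirclePoint, cos_sq_add_sin_sq]

lemma dist_unitCirclePoint_sq (a b : ℝ) :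
    dist (unitCirclePoint a) (unitCirclePoint b) ^ 2 = 2 - 2 * cos (a - b) := by
  rw [EuclideanSpace.dist_eq, sq_sqrt (by positivity), Fin.sum_univ_two]
  simp only [unitCirclePoint, Real.dist_eq, sq_abs, cos_sub, Matrix.cons_val_zero,
    Matrix.cons_val_one, Matrix.cons_val_fin_one]
  nlinarith [sin_sq_add_cos_sq a, sin_sq_add_cos_sq b]

lemma cos_lt_one_half {x : ℝ} (h₁ : π / 3 < x) (h₂ : x < 5 * π / 3) : cos x < 1 / 2 := by
  rw [← cos_pi_div_three]
  rcases le_total x π with hx | hx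
  · exact cos_lt_cos_of_nonneg_of_le_pi (by positivity) hx h₁
  · rw [← cos_two_pi_sub]
    exact cos_lt_cos_of_nonneg_of_le_pi (by positivity) (by linarith) (by linarith)

lemma one_lt_dist_unitCirclePoint {a b : ℝ} (h₁ : π / 3 < |a - b|) (h₂ : |a - b| < 5 * π / 3) :
    1 < dist (unitCirclePoint a) (unitCirclePoint b) := by
  have hcos : cos (a - b) < 1 / 2 := by
    rw [← cos_abs]; exact cos_lt_one_half h₁ h₂
  have hsq := dist_unitCirclePoint_sq a b
  nlinarith [dist_nonneg (x := unitCirclePoint a) (y := unitCirclePoint b)]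

noncomputable def regularPolygonVertex (n : ℕ) (k : Fin n) : EuclideanSpace ℝ (Fin 2) :=
  unitCirclePoint (2 * π * k / n)

lemma one_lt_dist_regularPolygonVertex {n : ℕ} (hn : n ≤ 5) {j k : Fin n} (hjk : j ≠ k) :
    1 < dist (regularPolygonVertex n j) (regularPolygonVertex n k) := by
  have hn0 : (0 : ℝ) < n := by exact_mod_cast j.pos
  obtain ⟨m, hm₁, hm₂, hm⟩ : ∃ m : ℕ, 1 ≤ m ∧ m + 1 ≤ n ∧ |(j : ℝ) - k| = m := by
    refine ⟨Int.natAbs ((j : ℤ) - k), by omega, by omega, ?_⟩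
    rw [Nat.cast_natAbs]; push_cast; rfl
  have hdiff : |2 * π * j / n - 2 * π * k / n| = 2 * π * m / n := by
    rw [← sub_div, ← mul_sub, abs_div, abs_mul, hm, abs_of_pos (by positivity), abs_of_pos hn0]
  apply one_lt_dist_unitCirclePoint <;> rw [hdiff]
  · rw [lt_div_iff₀ hn0]
    have : (n : ℝ) ≤ 5 := by exact_mod_cast hn
    have : (1 : ℝ) ≤ m := by exact_mod_cast hm₁
    nlinarith [pi_pos]
  · rw [div_lt_iff₀ hn0]
    have : (n : ℝ) ≤ 5 := by exact_mod_cast hn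
    have : (m : ℝ) + 1 ≤ n := by exact_mod_cast hm₂
    nlinarith [pi_pos]

lemma regularPolygonVertex_injective {n : ℕ} (hn : n ≤ 5) :
    Function.Injective (regularPolygonVertex n) := fun j k h => by
  by_contra hjk
  have := one_lt_dist_regularPolygonVertex hn hjk
  rw [h, dist_self] at this
  linarith

/-- Optimality of the constant 1/5: there exist 5 points `R` in the plane and a
point `b` such that each closed unit disk centered at a point of `R` contains
`b` and no other point of `R` than its center. -/
theorem stmt_1 :
    ∃ (R : Finset (EuclideanSpace ℝ (Fin 2))) (b : EuclideanSpace ℝ (Fin 2)),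
      R.card = 5 ∧
      ∀ p ∈ R, dist b p ≤ 1 ∧ ∀ q ∈ R, dist q p ≤ 1 → q = p := by
  refine ⟨Finset.univ.image (regularPolygonVertex 5), 0, ?_, ?_⟩
  · rw [Finset.card_image_of_injective _ (regularPolygonVertex_injective le_rfl), Finset.card_fin]
  · simp only [Finset.mem_image, Finset.mem_univ, true_and, forall_exists_index,
      forall_apply_eq_imp_iff]
    intro k
    refine ⟨by rw [dist_zero_left]; exact (norm_unitCirclePoint _).le, fun j hjk => ?_⟩
    by_contra h
    exact (one_lt_dist_regularPolygonVertex le_rfl fun e => h (congrArg _ e)).not_ge hjk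
end

section
/- Let E be a finite-dimensional real normed vector space (so that the closed unit ball of the norm is an origin-symmetric convex body). Let p_1, …, p_n be points of E and ρ_1, …, ρ_n > 0 real numbers, and let K_i denote the closed ball of radius ρ_i centered at p_i. Then there exists a subset S ⊆ {1, …, n} such that: (1) every point p_j (1 ≤ j ≤ n) lies in K_i for some i ∈ S, and (2) for all distinct i, j ∈ S, the point p_j does not lie in K_i (equivalently ‖p_j − p_i‖ > ρ_i); that is, the subfamily {K_i : i ∈ S} covers {p_1, …, p_n} and forms a strict Minkowski arrangement. -/
/-! Add the centres in order of increasing radius, keeping a ball exactly when its centre is not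
yet covered. A kept ball misses the earlier centres because its centre was uncovered by their
balls, and its radius is at most theirs, so their balls miss its centre as well. -/

open Finset

section

variable {ι α : Type*} [PseudoMetricSpace α]

def IsStrictMinkowskiArrangement (p : ι → α) (ρ : ι → ℝ) (S : Finset ι) : Prop :=
  ∀ i ∈ S, ∀ j ∈ S, i ≠ j → ρ i < dist (p j) (p i)

theorem IsStrictMinkowskiArrangement.empty (p : ι → α) (ρ : ι → ℝ) :
    IsStrictMinkowskiArrangement p ρ ∅ := by
  simp [IsStrictMinkowskiArrangement]

theorem IsStrictMinkowskiArrangement.insert [DecidableEq ι] {p : ι → α} {ρ : ι → ℝ}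
    {S : Finset ι} {a : ι} (hS : IsStrictMinkowskiArrangement p ρ S)
    (ha : ∀ i ∈ S, ρ i < dist (p a) (p i)) (hmin : ∀ i ∈ S, ρ a ≤ ρ i) :
    IsStrictMinkowskiArrangement p ρ (insert a S) := by
  intro i hi j hj hij
  rcases mem_insert.1 hi with rfl | hiS <;> rcases mem_insert.1 hj with rfl | hjS
  · exact absurd rfl hij
  · calc ρ i ≤ ρ j := hmin j hjS
      _ < dist (p i) (p j) := ha j hjS
      _ = dist (p j) (p i) := dist_comm _ _
  · exact ha i hiS
  · exact hS i hiS j hjS hij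

theorem exists_subset_covering_isStrictMinkowskiArrangement (p : ι → α) {ρ : ι → ℝ}
    (hρ : ∀ i, 0 ≤ ρ i) (T : Finset ι) :
    ∃ S ⊆ T, (∀ j ∈ T, ∃ i ∈ S, dist (p j) (p i) ≤ ρ i) ∧
      IsStrictMinkowskiArrangement p ρ S := by
  classical
  induction T using Finset.induction_on_min_value ρ with
  | empty => exact ⟨∅, subset_refl _, by simp, .empty p ρ⟩
  | insert a T _ hmin ih =>
    obtain ⟨S, hST, hcov, hS⟩ := ih
    by_cases hcovered : ∃ i ∈ S, dist (p a) (p i) ≤ ρ i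
    · refine ⟨S, hST.trans (subset_insert a T), ?_, hS⟩
      rintro j hj
      rcases mem_insert.1 hj with rfl | hj
      exacts [hcovered, hcov j hj]
    · push Not at hcovered
      refine ⟨Insert.insert a S, insert_subset_insert a hST, ?_,
        hS.insert hcovered fun i hi => hmin i (hST hi)⟩
      rintro j hj
      rcases mem_insert.1 hj with rfl | hj
      · exact ⟨j, mem_insert_self j S, by simpa using hρ j⟩
      · obtain ⟨i, hi, hji⟩ := hcov j hj
        exact ⟨i, mem_insert_of_mem hi, hji⟩

end

theorem stmt_2_general {E : Type*} [NormedAddCommGroup E] {n : ℕ} (p : Fin n → E) (ρ : Fin n → ℝ)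
    (hρ : ∀ i, 0 < ρ i) :
    ∃ S : Finset (Fin n),
      (∀ j, ∃ i ∈ S, dist (p j) (p i) ≤ ρ i) ∧
      (∀ i ∈ S, ∀ j ∈ S, i ≠ j → ρ i < dist (p j) (p i)) := by
  obtain ⟨S, -, hcov, hS⟩ :=
    exists_subset_covering_isStrictMinkowskiArrangement p (fun i => (hρ i).le) univ
  exact ⟨S, fun j => hcov j (mem_univ j), hS⟩

/-- Greedy covering lemma: given points `p i` with radii `ρ i > 0` in a
finite-dimensional real normed space, there is a subfamily of the balls
`K i = closedBall (p i) (ρ i)` covering all the points and forming a strict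
Minkowski arrangement (no member contains the center of another). -/
theorem stmt_2 {E : Type*} [NormedAddCommGroup E] [NormedSpace ℝ E]
    [FiniteDimensional ℝ E] {n : ℕ} (p : Fin n → E) (ρ : Fin n → ℝ)
    (hρ : ∀ i, 0 < ρ i) :
    ∃ S : Finset (Fin n),
      (∀ j, ∃ i ∈ S, dist (p j) (p i) ≤ ρ i) ∧
      (∀ i ∈ S, ∀ j ∈ S, i ≠ j → ρ i < dist (p j) (p i)) :=
  stmt_2_general p ρ hρ
end

section
/- Let E be a d-dimensional real normed vector space. Let R = {p_1, …, p_n} be a set of n pairwise distinct points of E, let ρ_1, …, ρ_n > 0, and let K_i be the closed ball of radius ρ_i centered at p_i. Let B be another finite set of points of E and λ > 0 a real number, and assume that for every i one has |B ∩ K_i| ≥ λ·|R ∩ K_i|. Then λ·|R| ≤ 3^d·|B|, i.e., |B|/|R| ≥ λ/3^d. -/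
/-!
Select balls greedily by decreasing radius, discarding every ball whose center is already
covered. The selected balls still cover `R`, and no selected center lies in another
selected ball at least as large as its own. Hence any point lies in at most `3 ^ d` selected
balls: seen from that point, the directions to their centers are `1`-separated unit vectors, and
a volume comparison of disjoint balls of radius `1/2` inside a ball of radius `3/2` bounds their
number. Summing the local hypothesis over the selected balls gives
`λ |R| ≤ ∑ λ |R ∩ Kᵢ| ≤ ∑ |B ∩ Kᵢ| ≤ 3 ^ d |B|`.
-/

open Metric MeasureTheory Module Set

section Selection

variable {α ι : Type*} [PseudoMetricSpace α]

def CentersAvoidLargerBalls (c : ι → α) (r : ι → ℝ) (S : Set ι) : Prop :=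
  S.Pairwise fun i k => r k ≤ r i → c k ∉ closedBall (c i) (r i)

theorem CentersAvoidLargerBalls.mono {c : ι → α} {r : ι → ℝ} {S T : Set ι}
    (hS : CentersAvoidLargerBalls c r S) (hTS : T ⊆ S) : CentersAvoidLargerBalls c r T :=
  Set.Pairwise.mono hTS hS

theorem exists_centersAvoidLargerBalls_subfamily_covering (c : ι → α) (r : ι → ℝ)
    (hr : ∀ i, 0 ≤ r i) (A : Finset ι) :
    ∃ S ⊆ A, (∀ j ∈ A, ∃ i ∈ S, c j ∈ closedBall (c i) (r i)) ∧
      CentersAvoidLargerBalls c r S := by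
  classical
  induction A using Finset.strongInduction with
  | H A ih =>
  rcases A.eq_empty_or_nonempty with rfl | hA
  · exact ⟨∅, by simp [CentersAvoidLargerBalls]⟩
  obtain ⟨i₀, hi₀, hmax⟩ := A.exists_max_image r hA
  set A' := A.filter fun j => c j ∉ closedBall (c i₀) (r i₀)
  have hA' : A' ⊂ A := Finset.filter_ssubset.2 ⟨i₀, hi₀, by simpa using hr i₀⟩
  obtain ⟨S, hSA', hcover, hS⟩ := ih A' hA'
  have hfar : ∀ k ∈ S, c k ∉ closedBall (c i₀) (r i₀) := fun k hk =>
    (Finset.mem_filter.1 (hSA' hk)).2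
  refine ⟨insert i₀ S, Finset.insert_subset hi₀ (hSA'.trans hA'.subset), ?_, ?_⟩
  · intro j hj
    by_cases hj₀ : c j ∈ closedBall (c i₀) (r i₀)
    · exact ⟨i₀, Finset.mem_insert_self _ _, hj₀⟩
    · obtain ⟨i, hi, hji⟩ := hcover j (Finset.mem_filter.2 ⟨hj, hj₀⟩)
      exact ⟨i, Finset.mem_insert_of_mem hi, hji⟩
  · rw [CentersAvoidLargerBalls, Finset.coe_insert, Set.pairwise_insert]
    refine ⟨hS, fun k hk _ => ⟨fun _ => hfar k hk, fun hk₀ => ?_⟩⟩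
    have hrk : r k = r i₀ := le_antisymm (hmax k (hA'.subset (hSA' hk))) hk₀
    have := hfar k hk
    rw [mem_closedBall, not_le] at this ⊢
    rwa [hrk, dist_comm]

end Selection

section NormedSpace

variable {E : Type*} [NormedAddCommGroup E] [NormedSpace ℝ E]

theorem card_le_three_pow_finrank_of_separated [FiniteDimensional ℝ E] {ι : Type*}
    (T : Finset ι) (u : ι → E) (hu : ∀ i ∈ T, ‖u i‖ ≤ 1)
    (hsep : (T : Set ι).Pairwise fun i k => 1 ≤ ‖u i - u k‖) :
    T.card ≤ 3 ^ finrank ℝ E := by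
  borelize E
  set μ : Measure E := Measure.addHaar
  set V := μ (ball 0 (1 / 2))
  have hdisj : (T : Set ι).PairwiseDisjoint fun i => ball (u i) (1 / 2) :=
    fun i hi k hk hik => ball_disjoint_ball (by rw [dist_eq_norm]; linarith [hsep hi hk hik])
  have hsub : ⋃ i ∈ T, ball (u i) (1 / 2) ⊆ ball 0 (3 * (1 / 2)) :=
    iUnion₂_subset fun i hi => ball_subset_ball' (by rw [dist_zero_right]; linarith [hu i hi])
  have hvol : (T.card : ENNReal) * V ≤ ENNReal.ofReal (3 ^ finrank ℝ E) * V :=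
    calc (T.card : ENNReal) * V = μ (⋃ i ∈ T, ball (u i) (1 / 2)) := by
          rw [measure_biUnion_finset hdisj fun _ _ => measurableSet_ball,
            Finset.sum_congr rfl fun i _ => μ.addHaar_ball_center (u i) _, Finset.sum_const,
            nsmul_eq_mul]
      _ ≤ μ (ball 0 (3 * (1 / 2))) := measure_mono hsub
      _ = ENNReal.ofReal (3 ^ finrank ℝ E) * V := μ.addHaar_ball_mul_of_pos 0 (by norm_num) _
  have hcard := (ENNReal.mul_le_mul_iff_left (measure_ball_pos μ 0 (by norm_num)).ne'
    measure_ball_lt_top.ne).1 hvol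
  rw [← Nat.cast_ofNat, ← Nat.cast_pow, ENNReal.ofReal_natCast] at hcard
  exact_mod_cast hcard

theorem one_lt_norm_inv_norm_smul_sub {a c : E} {M : ℝ} (ha : ‖a‖ ≤ M) (hc : ‖c‖ ≤ M)
    (hac : M < ‖a - c‖) : 1 < ‖‖a‖⁻¹ • a - ‖c‖⁻¹ • c‖ := by
  wlog hle : ‖a‖ ≤ ‖c‖ generalizing a c
  · rw [norm_sub_rev]
    exact this hc ha (by rwa [norm_sub_rev]) (le_of_not_ge hle)
  have ha0 : a ≠ 0 := by
    rintro rfl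
    rw [zero_sub, norm_neg] at hac
    linarith
  have hc0 : c ≠ 0 := norm_pos_iff.1 ((norm_pos_iff.2 ha0).trans_le hle)
  have hdecomp : a - c = ‖a‖ • (‖a‖⁻¹ • a - ‖c‖⁻¹ • c) + (‖a‖ - ‖c‖) • (‖c‖⁻¹ • c) := by
    rw [smul_sub, smul_inv_smul₀ (norm_ne_zero_iff.2 ha0), sub_smul,
      smul_inv_smul₀ (norm_ne_zero_iff.2 hc0)]
    abel
  have hbound : ‖a - c‖ ≤ ‖a‖ * ‖‖a‖⁻¹ • a - ‖c‖⁻¹ • c‖ + (‖c‖ - ‖a‖) := by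
    calc ‖a - c‖ ≤ ‖‖a‖ • (‖a‖⁻¹ • a - ‖c‖⁻¹ • c)‖ + ‖(‖a‖ - ‖c‖) • (‖c‖⁻¹ • c)‖ :=
          hdecomp ▸ norm_add_le _ _
      _ = ‖a‖ * ‖‖a‖⁻¹ • a - ‖c‖⁻¹ • c‖ + (‖c‖ - ‖a‖) := by
          rw [norm_smul, norm_smul, norm_smul (‖c‖⁻¹), norm_inv, norm_norm, norm_norm,
            inv_mul_cancel₀ (norm_ne_zero_iff.2 hc0), Real.norm_eq_abs,
            abs_of_nonpos (sub_nonpos.2 hle), mul_one, neg_sub]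
  refine lt_of_mul_lt_mul_left ?_ (norm_nonneg a)
  linarith

theorem CentersAvoidLargerBalls.card_le_three_pow_finrank [FiniteDimensional ℝ E] {ι : Type*}
    {c : ι → E} {r : ι → ℝ} {T : Finset ι} (hT : CentersAvoidLargerBalls c r T) {b : E}
    (hb : ∀ i ∈ T, b ∈ closedBall (c i) (r i)) : T.card ≤ 3 ^ finrank ℝ E := by
  have hb' : ∀ i ∈ T, ‖c i - b‖ ≤ r i := fun i hi => by
    simpa only [mem_closedBall', dist_eq_norm] using hb i hi
  have hfar : ∀ i ∈ T, ∀ k ∈ T, i ≠ k → r k ≤ r i →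
      1 < ‖‖c k - b‖⁻¹ • (c k - b) - ‖c i - b‖⁻¹ • (c i - b)‖ := by
    intro i hi k hk hik hki
    have hout := hT hi hk hik hki
    rw [mem_closedBall, not_le, dist_eq_norm, ← sub_sub_sub_cancel_right _ _ b] at hout
    exact one_lt_norm_inv_norm_smul_sub ((hb' k hk).trans hki) (hb' i hi) hout
  refine card_le_three_pow_finrank_of_separated T (fun i => ‖c i - b‖⁻¹ • (c i - b)) ?_ ?_
  · intro i _
    rcases eq_or_ne (c i - b) 0 with h | h
    · simp [h]
    · rw [norm_smul, norm_inv, norm_norm, inv_mul_cancel₀ (norm_ne_zero_iff.2 h)]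
  · intro i hi k hk hik
    rcases le_total (r k) (r i) with hki | hik'
    · rw [norm_sub_rev]
      exact (hfar i hi k hk hik hki).le
    · exact (hfar k hk i hi hik.symm hik').le

end NormedSpace

theorem sum_ncard_inter_le_mul {α ι : Type*} {B : Set α} (hB : B.Finite) (S : Finset ι)
    (K : ι → Set α) {m : ℕ} (hm : ∀ b ∈ B, ∀ T ⊆ S, (∀ i ∈ T, b ∈ K i) → T.card ≤ m) :
    ∑ i ∈ S, (B ∩ K i).ncard ≤ B.ncard * m := by
  classical
  have hinter : ∀ i, (B ∩ K i).ncard = (hB.toFinset.filter (· ∈ K i)).card := fun i => by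
    rw [← Set.ncard_coe_finset, Finset.coe_filter]
    simp only [Set.Finite.mem_toFinset, Set.ofPred_and, Set.ofPred_mem_eq]
  calc ∑ i ∈ S, (B ∩ K i).ncard = ∑ b ∈ hB.toFinset, (S.filter (b ∈ K ·)).card := by
        simp only [hinter, Finset.card_filter]
        exact Finset.sum_comm
    _ ≤ ∑ _b ∈ hB.toFinset, m := Finset.sum_le_sum fun b hb =>
        hm b (hB.mem_toFinset.1 hb) _ (Finset.filter_subset _ _) fun _ hi =>
          (Finset.mem_filter.1 hi).2
    _ = B.ncard * m := by rw [Finset.sum_const, smul_eq_mul, Set.ncard_eq_toFinset_card B hB]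

/-- Local-to-global theorem in a `d`-dimensional real normed space: if in each
ball `K i` the number of blue points is at least `λ` times the number of red
points, then `λ * |R| ≤ 3 ^ d * |B|`. -/
theorem stmt_3 {E : Type*} [NormedAddCommGroup E] [NormedSpace ℝ E]
    [FiniteDimensional ℝ E] {d : ℕ} (hd : Module.finrank ℝ E = d)
    {n : ℕ} (p : Fin n → E) (hp : Function.Injective p)
    (ρ : Fin n → ℝ) (hρ : ∀ i, 0 < ρ i)
    (B : Set E) (hB : B.Finite) (lam : ℝ) (hlam : 0 < lam)
    (h : ∀ i, lam * (Set.range p ∩ Metric.closedBall (p i) (ρ i)).ncard ≤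
              ((B ∩ Metric.closedBall (p i) (ρ i)).ncard : ℝ)) :
    lam * n ≤ 3 ^ d * B.ncard := by
  subst hd
  set K : Fin n → Set E := fun i => closedBall (p i) (ρ i)
  obtain ⟨S, -, hcover, hS⟩ :=
    exists_centersAvoidLargerBalls_subfamily_covering p ρ (fun i => (hρ i).le) Finset.univ
  have hred : n ≤ ∑ i ∈ S, (range p ∩ K i).ncard := by
    have hR : range p = ⋃ i ∈ S, range p ∩ K i := by
      rw [← inter_iUnion₂, left_eq_inter]
      rintro _ ⟨j, rfl⟩
      obtain ⟨i, hi, hj⟩ := hcover j (Finset.mem_univ j)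
      exact mem_iUnion₂_of_mem hi hj
    calc n = (range p).ncard := by rw [ncard_range_of_injective hp, Nat.card_fin]
      _ = (⋃ i ∈ S, range p ∩ K i).ncard := congrArg ncard hR
      _ ≤ _ := S.set_ncard_biUnion_le _
  have hblue : ∑ i ∈ S, (B ∩ K i).ncard ≤ B.ncard * 3 ^ finrank ℝ E :=
    sum_ncard_inter_le_mul hB S K fun _ _ T hTS hbT =>
      (hS.mono (Finset.coe_subset.2 hTS)).card_le_three_pow_finrank hbT
  calc lam * n ≤ lam * ∑ i ∈ S, ((range p ∩ K i).ncard : ℝ) := by gcongr; exact_mod_cast hred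
    _ = ∑ i ∈ S, lam * (range p ∩ K i).ncard := Finset.mul_sum _ _ _
    _ ≤ ∑ i ∈ S, ((B ∩ K i).ncard : ℝ) := Finset.sum_le_sum fun i _ => h i
    _ ≤ 3 ^ finrank ℝ E * B.ncard := by rw [mul_comm]; exact_mod_cast hblue
end

section
/- Let ℝ^d be equipped with the supremum norm ‖x‖_∞ = max_i |x_i| (so closed balls are axis-parallel cubes). Let R = {p_1, …, p_n} be a set of n pairwise distinct points of ℝ^d, let ρ_1, …, ρ_n > 0, and let K_i be the closed ℓ∞-ball of radius ρ_i centered at p_i. Let B be another finite set of points of ℝ^d and λ > 0, and assume that for every i one has |B ∩ K_i| ≥ λ·|R ∩ K_i|. Then λ·|R| ≤ 2^d·|B|, i.e., |B|/|R| ≥ λ/2^d. -/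
/-!
Choose the cubes greedily by decreasing radius, discarding at each step the centers covered by
the chosen cube. The selected cubes cover `R`, and any two of their centers are farther apart
than the larger of the two radii. Summing the local hypothesis over them gives
`λ |R| ≤ ∑ |B ∩ Kᵢ|`. In the sup norm, if `x` lies in two cubes whose centers are in the same
closed orthant around `x`, the centers are within the larger radius of each other; so `x` lies in
at most one selected cube per orthant, i.e. in at most `2 ^ d` of them, and the sum is at most
`2 ^ d |B|`.
-/

open Finset Metric

theorem exists_subfamily_covering_centers_pairwise_far {X ι : Type*} [PseudoMetricSpace X]
    (c : ι → X) (r : ι → ℝ) (I : Finset ι) (hr : ∀ i ∈ I, 0 ≤ r i) :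
    ∃ S ⊆ I, (∀ j ∈ I, ∃ i ∈ S, c j ∈ closedBall (c i) (r i)) ∧
      (S : Set ι).Pairwise fun i j => max (r i) (r j) < dist (c i) (c j) := by
  classical
  induction I using Finset.strongInduction with
  | H I ih =>
  rcases I.eq_empty_or_nonempty with rfl | hI
  · exact ⟨∅, empty_subset _, by simp, by simp⟩
  obtain ⟨i, hiI, hmax⟩ := I.exists_max_image r hI
  set I' := I.filter fun j => c j ∉ closedBall (c i) (r i)
  have hI' : I' ⊂ I := filter_ssubset.2 ⟨i, hiI, by simpa using hr i hiI⟩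
  obtain ⟨S, hSI', hcover, hfar⟩ := ih I' hI' fun j hj => hr j (filter_subset _ _ hj)
  have far_from_i : ∀ j ∈ S, max (r i) (r j) < dist (c i) (c j) := fun j hj => by
    have hj := mem_filter.1 (hSI' hj)
    rw [max_eq_left (hmax j hj.1), dist_comm]
    simpa using hj.2
  refine ⟨insert i S, insert_subset hiI (hSI'.trans (filter_subset _ _)), ?_, ?_⟩
  · intro j hj
    by_cases hji : c j ∈ closedBall (c i) (r i)
    · exact ⟨i, mem_insert_self _ _, hji⟩
    · obtain ⟨k, hk, hjk⟩ := hcover j (mem_filter.2 ⟨hj, hji⟩)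
      exact ⟨k, mem_insert_of_mem hk, hjk⟩
  · rw [coe_insert]
    refine hfar.insert fun j hj _ => ⟨far_from_i j hj, ?_⟩
    rw [max_comm, dist_comm]
    exact far_from_i j hj

theorem Real.dist_le_max_dist_of_le_iff_le {a b x : ℝ} (h : a ≤ x ↔ b ≤ x) :
    dist a b ≤ max (dist x a) (dist x b) := by
  rw [dist_comm x a, dist_comm x b]
  by_cases ha : a ≤ x
  · have hb := h.1 ha
    rw [Real.dist_eq, Real.dist_eq, Real.dist_eq, abs_of_nonpos (sub_nonpos.2 ha),
      abs_of_nonpos (sub_nonpos.2 hb), abs_sub_le_iff]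
    constructor
    · exact le_max_of_le_right (by linarith)
    · exact le_max_of_le_left (by linarith)
  · have hb : x < b := lt_of_not_ge (mt h.2 ha)
    rw [not_le] at ha
    rw [Real.dist_eq, Real.dist_eq, Real.dist_eq, abs_of_pos (sub_pos.2 ha),
      abs_of_pos (sub_pos.2 hb), abs_sub_le_iff]
    constructor
    · exact le_max_of_le_left (by linarith)
    · exact le_max_of_le_right (by linarith)

theorem dist_le_max_dist_of_le_iff_le_pi {ι : Type*} [Fintype ι] {a b x : ι → ℝ}
    (h : ∀ m, a m ≤ x m ↔ b m ≤ x m) :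
    dist a b ≤ max (dist x a) (dist x b) :=
  (dist_pi_le_iff (le_max_of_le_left dist_nonneg)).2 fun m =>
    (Real.dist_le_max_dist_of_le_iff_le (h m)).trans <|
      max_le_max (dist_le_pi_dist x a m) (dist_le_pi_dist x b m)

theorem card_le_two_pow_of_pairwise_far {ι κ : Type*} [Fintype ι] (c : κ → ι → ℝ) (r : κ → ℝ)
    (x : ι → ℝ) (T : Finset κ)
    (hfar : (T : Set κ).Pairwise fun i j => max (r i) (r j) < dist (c i) (c j))
    (hx : ∀ i ∈ T, x ∈ closedBall (c i) (r i)) :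
    #T ≤ 2 ^ Fintype.card ι := by
  classical
  let orthant : κ → ι → Prop := fun i m => c i m ≤ x m
  have hinj : Set.InjOn orthant T := by
    intro i hi j hj hij
    by_contra hne
    refine (hfar hi hj hne).not_ge ?_
    refine (dist_le_max_dist_of_le_iff_le_pi fun m => ?_).trans (max_le_max (hx i hi) (hx j hj))
    exact iff_of_eq (congrFun hij m)
  calc #T ≤ #(univ : Finset (ι → Prop)) :=
        card_le_card_of_injOn orthant (fun _ _ => mem_univ _) hinj
    _ = 2 ^ Fintype.card ι := by simp

theorem mul_ncard_le_of_cover {X ι : Type*} {R B : Set X} (hB : B.Finite) {K : ι → Set X}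
    {S : Finset ι} {m : ℕ} {lam : ℝ} (hlam : 0 ≤ lam) (hcover : R ⊆ ⋃ i ∈ S, K i)
    (hmult : ∀ x ∈ B, ∀ T ⊆ S, (∀ i ∈ T, x ∈ K i) → #T ≤ m)
    (hloc : ∀ i ∈ S, lam * (R ∩ K i).ncard ≤ (B ∩ K i).ncard) :
    lam * R.ncard ≤ m * B.ncard := by
  classical
  lift B to Finset X using hB
  have hR : R.ncard ≤ ∑ i ∈ S, (R ∩ K i).ncard := calc
    R.ncard = (⋃ i ∈ S, R ∩ K i).ncard := by
      rw [← Set.inter_iUnion₂, Set.inter_eq_left.2 hcover]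
    _ ≤ ∑ i ∈ S, (R ∩ K i).ncard := S.set_ncard_biUnion_le _
  have hB : ∑ i ∈ S, (↑B ∩ K i).ncard ≤ m * #B := calc
    ∑ i ∈ S, (↑B ∩ K i).ncard = ∑ i ∈ S, #(B.bipartiteAbove (fun i x => x ∈ K i) i) := by
      refine sum_congr rfl fun i _ => ?_
      rw [← Set.ncard_coe_finset, bipartiteAbove, coe_filter]
      rfl
    _ = ∑ x ∈ B, #(S.bipartiteBelow (fun i x => x ∈ K i) x) :=
      sum_card_bipartiteAbove_eq_sum_card_bipartiteBelow _
    _ ≤ ∑ _x ∈ B, m :=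
      sum_le_sum fun x hx => hmult x hx _ (filter_subset _ _) fun i hi => (mem_filter.1 hi).2
    _ = m * #B := by rw [sum_const, smul_eq_mul, mul_comm]
  calc lam * R.ncard ≤ ∑ i ∈ S, lam * (R ∩ K i).ncard := by
        rw [← mul_sum]; exact mul_le_mul_of_nonneg_left (by exact_mod_cast hR) hlam
    _ ≤ ∑ i ∈ S, ((↑B ∩ K i).ncard : ℝ) := sum_le_sum hloc
    _ ≤ m * (B : Set X).ncard := by rw [Set.ncard_coe_finset]; exact_mod_cast hB

/-- Local-to-global theorem for the sup norm on `ℝ^d` (closed balls are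
axis-parallel cubes): if in each cube `K i` the number of blue points is at
least `λ` times the number of red points, then `λ * |R| ≤ 2 ^ d * |B|`. -/
theorem stmt_4 {d : ℕ} {n : ℕ} (p : Fin n → (Fin d → ℝ))
    (hp : Function.Injective p) (ρ : Fin n → ℝ) (hρ : ∀ i, 0 < ρ i)
    (B : Set (Fin d → ℝ)) (hB : B.Finite) (lam : ℝ) (hlam : 0 < lam)
    (h : ∀ i, lam * (Set.range p ∩ Metric.closedBall (p i) (ρ i)).ncard ≤
              ((B ∩ Metric.closedBall (p i) (ρ i)).ncard : ℝ)) :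
    lam * n ≤ 2 ^ d * B.ncard := by
  obtain ⟨S, -, hcover, hfar⟩ :=
    exists_subfamily_covering_centers_pairwise_far p ρ univ fun i _ => (hρ i).le
  have key := mul_ncard_le_of_cover hB hlam.le (R := Set.range p) (S := S)
    (K := fun i => closedBall (p i) (ρ i)) (m := 2 ^ d) ?_ ?_ fun i _ => h i
  · simpa [Set.ncard_range_of_injective hp] using key
  · rintro _ ⟨j, rfl⟩
    obtain ⟨i, hi, hji⟩ := hcover j (mem_univ j)
    exact Set.mem_biUnion hi hji
  · intro x _ T hTS hx
    simpa using card_le_two_pow_of_pairwise_far p ρ x T (hfar.mono (coe_subset.2 hTS)) hx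
end

section
/- The constant 1/2^d in the cube (ℓ∞) local-to-global theorem is optimal: in ℝ^d with the supremum norm, let R = {−1, 1}^d be the set of the 2^d sign vectors and B = {0}. Then for every p ∈ R, the closed ℓ∞-ball of radius 1 centered at p contains the origin and contains no point of R other than p itself; hence |B ∩ K_p| ≥ |R ∩ K_p| for every p ∈ R while |B| = |R|/2^d. -/
/-!
A sign vector has all coordinates of absolute value 1, so it lies at sup-distance 1 from the
origin, while two distinct sign vectors differ by 2 in some coordinate and so lie at
sup-distance 2. The `2 ^ d` sign vectors are counted as a product of `d` two-element sets.
-/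

open Set

theorem Set.ncard_univ_pi {ι : Type*} [Fintype ι] {β : ι → Type*} (t : ∀ i, Set (β i)) :
    (univ.pi t).ncard = ∏ i, (t i).ncard := by
  simp only [← Nat.card_coe_set_eq, Nat.card_congr (Equiv.Set.univPi t), Nat.card_pi]

def signVectors (ι : Type*) : Set (ι → ℝ) := {x | ∀ i, x i = 1 ∨ x i = -1}

section signVectors

variable {ι : Type*}

theorem signVectors_eq_univ_pi : signVectors ι = univ.pi fun _ ↦ {1, -1} := by
  ext x
  simp [signVectors]

theorem ncard_signVectors [Fintype ι] : (signVectors ι).ncard = 2 ^ Fintype.card ι := by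
  rw [signVectors_eq_univ_pi, Set.ncard_univ_pi, ncard_pair (by norm_num), Finset.prod_const,
    Finset.card_univ]

theorem norm_le_one_of_mem_signVectors [Fintype ι] {x : ι → ℝ} (hx : x ∈ signVectors ι) :
    ‖x‖ ≤ 1 := by
  refine (pi_norm_le_iff_of_nonneg zero_le_one).2 fun i ↦ ?_
  rcases hx i with h | h <;> simp [h]

theorem two_le_dist_of_mem_signVectors [Fintype ι] {x y : ι → ℝ} (hx : x ∈ signVectors ι)
    (hy : y ∈ signVectors ι) (hne : x ≠ y) : 2 ≤ dist x y := by
  obtain ⟨i, hi⟩ := Function.ne_iff.1 hne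
  have hxy : dist (x i) (y i) = 2 := by
    rcases hx i with h | h <;> rcases hy i with h' | h' <;>
      simp_all [Real.dist_eq] <;> norm_num
  exact hxy ▸ dist_le_pi_dist x y i

end signVectors

/-- Optimality of the constant `1/2^d` for the sup norm on `ℝ^d`: the set `R`
of the `2^d` sign vectors is such that each closed ℓ∞-ball of radius 1 centered
at a point of `R` contains the origin and no point of `R` other than its
center. -/
theorem stmt_5 (d : ℕ) :
    ({x : Fin d → ℝ | ∀ i, x i = 1 ∨ x i = -1}).ncard = 2 ^ d ∧
    ∀ p ∈ {x : Fin d → ℝ | ∀ i, x i = 1 ∨ x i = -1},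
      dist (0 : Fin d → ℝ) p ≤ 1 ∧
      ∀ q ∈ {x : Fin d → ℝ | ∀ i, x i = 1 ∨ x i = -1},
        dist q p ≤ 1 → q = p := by
  refine ⟨?_, fun p hp ↦ ⟨?_, fun q hq hqp ↦ ?_⟩⟩
  · exact ncard_signVectors.trans (by rw [Fintype.card_fin])
  · rw [dist_zero_left]
    exact norm_le_one_of_mem_signVectors hp
  · by_contra hne
    linarith [two_le_dist_of_mem_signVectors hq hp hne]
end

section
/- Any intersecting strict Minkowski arrangement of Euclidean disks in the plane has at most 5 members. Equivalently: if p_1, …, p_6 are six pairwise distinct points in the Euclidean plane ℝ², ρ_1, …, ρ_6 > 0, and there is a point b contained in all six closed Euclidean disks of radius ρ_i centered at p_i (i.e., ‖b − p_i‖ ≤ ρ_i for all i), then some disk contains the center of another, i.e., there exist indices i ≠ j with ‖p_j − p_i‖ ≤ ρ_i. -/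
/-!
Put the common point `b` at the origin and let `vᵢ = pᵢ - b`. Among six directions in the plane
two make an angle of at most `π / 3`: fixing one direction, the other five either come within
`π / 3` of it or lie in an arc of length `4π / 3`, which four half-open arcs of length `π / 3`
cover. Such an angle means `‖vᵢ‖ ‖vⱼ‖ ≤ 2 ⟪vᵢ, vⱼ⟫` (also when a vector is `0`), and then the
law of cosines gives `‖vⱼ - vᵢ‖ ≤ max ‖vᵢ‖ ‖vⱼ‖`: the disk around the center farther from `b`
contains the other center.
-/

open Real Module
open scoped InnerProductSpace

theorem norm_sub_le_max_of_norm_mul_norm_le_two_mul_inner {E : Type*} [NormedAddCommGroup E]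
    [InnerProductSpace ℝ E] {v w : E} (h : ‖v‖ * ‖w‖ ≤ 2 * ⟪v, w⟫_ℝ) :
    ‖w - v‖ ≤ max ‖v‖ ‖w‖ := by
  have hsq : ‖w - v‖ ^ 2 ≤ ‖v‖ ^ 2 + ‖w‖ ^ 2 - ‖v‖ * ‖w‖ := by
    rw [norm_sub_sq_real, real_inner_comm]; linarith
  refine le_of_sq_le_sq ?_ (le_max_of_le_left (norm_nonneg v))
  rcases le_total ‖v‖ ‖w‖ with hvw | hwv
  · rw [max_eq_right hvw]; nlinarith [norm_nonneg v]
  · rw [max_eq_left hwv]; nlinarith [norm_nonneg w]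

theorem Complex.real_inner_eq_norm_mul_norm_mul_cos_arg_sub (z w : ℂ) :
    ⟪z, w⟫_ℝ = ‖z‖ * ‖w‖ * Real.cos (w.arg - z.arg) := by
  rw [Complex.inner, Real.cos_sub]
  simp only [Complex.mul_re, Complex.conj_re, Complex.conj_im]
  rw [← Complex.norm_mul_cos_arg z, ← Complex.norm_mul_sin_arg z,
    ← Complex.norm_mul_cos_arg w, ← Complex.norm_mul_sin_arg w]
  ring

theorem Real.half_le_cos_of_abs_le {x : ℝ} (h : |x| ≤ π / 3) : 1 / 2 ≤ cos x := by
  rw [← cos_abs, ← cos_pi_div_three]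
  exact cos_le_cos_of_nonneg_of_le_pi (abs_nonneg x) (by linarith [pi_pos]) h

theorem exists_ne_abs_sub_lt_of_mem_Ico {n : ℕ} {a δ : ℝ} (hδ : 0 < δ) (x : Fin (n + 1) → ℝ)
    (hx : ∀ i, x i ∈ Set.Ico a (a + n * δ)) : ∃ i j, i ≠ j ∧ |x i - x j| < δ := by
  have hbucket : ∀ i ∈ Finset.univ, ⌊(x i - a) / δ⌋ ∈ Finset.Ico (0 : ℤ) n := by
    intro i _
    obtain ⟨hlo, hhi⟩ := hx i
    rw [Finset.mem_Ico, Int.floor_nonneg, Int.floor_lt, le_div_iff₀ hδ, div_lt_iff₀ hδ]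
    push_cast
    constructor <;> linarith
  obtain ⟨i, -, j, -, hij, hfloor⟩ := Finset.exists_ne_map_eq_of_card_lt_of_maps_to
    (by simp) hbucket
  refine ⟨i, j, hij, ?_⟩
  have := Int.abs_sub_lt_one_of_floor_eq_floor hfloor
  rwa [← sub_div, sub_sub_sub_cancel_right, abs_div, abs_of_pos hδ, div_lt_one hδ] at this

theorem Real.cos_toIcoMod_two_pi (a x : ℝ) : cos (toIcoMod two_pi_pos a x) = cos x := by
  rw [← Angle.cos_coe, Angle.coe_toIcoMod, Angle.cos_coe]

theorem Real.exists_ne_half_le_cos_sub (θ : Fin 6 → ℝ) :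
    ∃ i j, i ≠ j ∧ 1 / 2 ≤ cos (θ j - θ i) := by
  by_contra! h
  set φ : Fin 5 → ℝ := fun j => toIcoMod two_pi_pos (π / 3) (θ j.succ - θ 0)
  have hφ : ∀ j, φ j ∈ Set.Ico (π / 3) (π / 3 + (4 : ℕ) * (π / 3)) := by
    intro j
    obtain ⟨hlo, hhi⟩ := toIcoMod_mem_Ico two_pi_pos (π / 3) (θ j.succ - θ 0)
    refine ⟨hlo, ?_⟩
    by_contra! hge
    have hnear : 1 / 2 ≤ cos (φ j - 2 * π) :=
      half_le_cos_of_abs_le (abs_le.2 ⟨by push_cast at hge; linarith, by linarith⟩)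
    rw [cos_sub_two_pi, cos_toIcoMod_two_pi] at hnear
    exact (h 0 j.succ (Fin.succ_ne_zero j).symm).not_ge hnear
  obtain ⟨j, k, hjk, hclose⟩ := exists_ne_abs_sub_lt_of_mem_Ico (by positivity) φ hφ
  have hcos : cos (φ j - φ k) = cos (θ j.succ - θ k.succ) := by
    rw [← Angle.cos_coe, ← Angle.cos_coe, Angle.coe_sub, Angle.coe_toIcoMod, Angle.coe_toIcoMod, Angle.coe_sub, Angle.coe_sub,
      sub_sub_sub_cancel_right, Angle.coe_sub]
  exact (h k.succ j.succ (Fin.succ_injective _ |>.ne hjk.symm)).not_ge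
    (hcos ▸ half_le_cos_of_abs_le hclose.le)

theorem Complex.exists_ne_norm_mul_norm_le_two_mul_inner (z : Fin 6 → ℂ) :
    ∃ i j, i ≠ j ∧ ‖z i‖ * ‖z j‖ ≤ 2 * ⟪z i, z j⟫_ℝ := by
  obtain ⟨i, j, hij, hcos⟩ := Real.exists_ne_half_le_cos_sub fun i => (z i).arg
  refine ⟨i, j, hij, ?_⟩
  rw [real_inner_eq_norm_mul_norm_mul_cos_arg_sub]
  nlinarith [mul_nonneg (norm_nonneg (z i)) (norm_nonneg (z j))]

theorem exists_ne_norm_mul_norm_le_two_mul_inner {E : Type*} [NormedAddCommGroup E]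
    [InnerProductSpace ℝ E] (hE : finrank ℝ E = 2) (v : Fin 6 → E) :
    ∃ i j, i ≠ j ∧ ‖v i‖ * ‖v j‖ ≤ 2 * ⟪v i, v j⟫_ℝ := by
  have : FiniteDimensional ℝ E := .of_finrank_eq_succ hE
  let f : E ≃ₗᵢ[ℝ] ℂ := (stdOrthonormalBasis ℝ E).equiv Complex.orthonormalBasisOneI (finCongr hE)
  obtain ⟨i, j, hij, h⟩ := Complex.exists_ne_norm_mul_norm_le_two_mul_inner (f ∘ v)
  refine ⟨i, j, hij, ?_⟩
  simpa only [Function.comp_apply, f.norm_map, f.inner_map_map] using h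

theorem stmt_6_general (p : Fin 6 → EuclideanSpace ℝ (Fin 2))
    (ρ : Fin 6 → ℝ)
    (b : EuclideanSpace ℝ (Fin 2)) (hb : ∀ i, dist b (p i) ≤ ρ i) :
    ∃ i j, i ≠ j ∧ dist (p j) (p i) ≤ ρ i := by
  obtain ⟨i, j, hij, hinner⟩ :=
    exists_ne_norm_mul_norm_le_two_mul_inner finrank_euclideanSpace_fin (fun i => p i - b)
  have hclose := norm_sub_le_max_of_norm_mul_norm_le_two_mul_inner hinner
  simp only [sub_sub_sub_cancel_right, ← dist_eq_norm, dist_comm _ b] at hclose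
  rcases le_total (dist b (p j)) (dist b (p i)) with hji | hij'
  · rw [max_eq_left hji] at hclose
    exact ⟨i, j, hij, hclose.trans (hb i)⟩
  · rw [max_eq_right hij', dist_comm] at hclose
    exact ⟨j, i, hij.symm, hclose.trans (hb j)⟩

/-- An intersecting strict Minkowski arrangement of Euclidean disks in the
plane has at most 5 members: among six distinct disks sharing a common point,
some disk contains the center of another. -/
theorem stmt_6 (p : Fin 6 → EuclideanSpace ℝ (Fin 2))
    (hp : Function.Injective p) (ρ : Fin 6 → ℝ) (hρ : ∀ i, 0 < ρ i)
    (b : EuclideanSpace ℝ (Fin 2)) (hb : ∀ i, dist b (p i) ≤ ρ i) :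
    ∃ i j, i ≠ j ∧ dist (p j) (p i) ≤ ρ i :=
  stmt_6_general p ρ b hb
end

section
/- Any intersecting strict Minkowski arrangement of axis-parallel cubes in ℝ^d has at most 2^d members. Equivalently: if p_1, …, p_{2^d+1} are pairwise distinct points of ℝ^d, ρ_1, …, ρ_{2^d+1} > 0, and there is a point b with ‖b − p_i‖_∞ ≤ ρ_i for all i (all 2^d + 1 closed ℓ∞-balls share the point b), then some ball contains the center of another, i.e., there exist indices i ≠ j with ‖p_j − p_i‖_∞ ≤ ρ_i. -/
/-!
Sort the centers by the closed orthant with apex `b` they lie in, i.e. by the signs of the coordinates of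
`p i - b`. There are only `2^d` orthants, so two centers `p i`, `p j` share one, say with
`ρ j ≤ ρ i`. In each coordinate `p i k` and `p j k` then lie on the same side of `b k`, so
their distance is at most the larger of their distances to `b k`, hence at most `ρ i`.
-/

lemma Real.dist_le_max_dist_of_le_iff {a c t : ℝ} (h : a ≤ t ↔ c ≤ t) :
    dist a c ≤ max (dist a t) (dist c t) := by
  simp only [Real.dist_eq]
  by_cases ha : a ≤ t
  · have hc := h.mp ha
    rw [abs_of_nonpos (sub_nonpos.2 ha), abs_of_nonpos (sub_nonpos.2 hc), abs_sub_le_iff]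
    exact ⟨le_max_of_le_right (by linarith), le_max_of_le_left (by linarith)⟩
  · have hc := lt_of_not_ge (mt h.mpr ha)
    rw [abs_of_pos (sub_pos.2 (lt_of_not_ge ha)), abs_of_pos (sub_pos.2 hc), abs_sub_le_iff]
    exact ⟨le_max_of_le_left (by linarith), le_max_of_le_right (by linarith)⟩

lemma dist_le_max_dist_of_forall_le_iff {ι : Type*} [Fintype ι] {x y b : ι → ℝ}
    (h : ∀ k, x k ≤ b k ↔ y k ≤ b k) : dist x y ≤ max (dist x b) (dist y b) :=
  (dist_pi_le_iff (by positivity)).2 fun k =>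
    (Real.dist_le_max_dist_of_le_iff (h k)).trans
      (max_le_max (dist_le_pi_dist x b k) (dist_le_pi_dist y b k))

theorem exists_ne_dist_le_of_two_pow_card_lt {ι σ : Type*} [Fintype ι] [Fintype σ]
    (hcard : 2 ^ Fintype.card ι < Fintype.card σ) (p : σ → ι → ℝ) (ρ : σ → ℝ) (b : ι → ℝ)
    (hb : ∀ i, dist b (p i) ≤ ρ i) : ∃ i j, i ≠ j ∧ dist (p j) (p i) ≤ ρ i := by
  classical
  let orthant : σ → ι → Bool := fun i k => decide (p i k ≤ b k)
  obtain ⟨i, j, hij, hsame⟩ := Fintype.exists_ne_map_eq_of_card_lt orthant (by simpa using hcard)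
  have key : ∀ {m n}, orthant m = orthant n → ρ n ≤ ρ m → dist (p n) (p m) ≤ ρ m := by
    intro m n hmn hρ
    refine (dist_le_max_dist_of_forall_le_iff (b := b) fun k => ?_).trans ?_
    · simpa [orthant] using (congrFun hmn k).symm
    · rw [dist_comm _ b, dist_comm _ b]
      exact max_le (hρ.trans' (hb n)) (hb m)
  rcases le_total (ρ i) (ρ j) with h | h
  · exact ⟨j, i, hij.symm, key hsame.symm h⟩
  · exact ⟨i, j, hij, key hsame h⟩

theorem stmt_8_general {d : ℕ} (p : Fin (2 ^ d + 1) → (Fin d → ℝ))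
    (ρ : Fin (2 ^ d + 1) → ℝ)
    (b : Fin d → ℝ) (hb : ∀ i, dist b (p i) ≤ ρ i) :
    ∃ i j, i ≠ j ∧ dist (p j) (p i) ≤ ρ i :=
  exists_ne_dist_le_of_two_pow_card_lt (by simp) p ρ b hb

/-- An intersecting strict Minkowski arrangement of axis-parallel cubes
(closed ℓ∞-balls) in `ℝ^d` has at most `2^d` members: among `2^d + 1` distinct
such cubes sharing a common point, some cube contains the center of another. -/
theorem stmt_8 {d : ℕ} (p : Fin (2 ^ d + 1) → (Fin d → ℝ))
    (hp : Function.Injective p) (ρ : Fin (2 ^ d + 1) → ℝ) (hρ : ∀ i, 0 < ρ i)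
    (b : Fin d → ℝ) (hb : ∀ i, dist b (p i) ≤ ρ i) :
    ∃ i j, i ≠ j ∧ dist (p j) (p i) ≤ ρ i :=
  stmt_8_general p ρ b hb
end

section
/- Let K ⊆ ℝ² be a convex body (a compact convex set with nonempty interior) and let ε, λ > 0 be real numbers. Then there exist finite nonempty sets of points R and B in the plane such that |B| < ε·|R|, and for every point p ∈ R there exists a translate t + K of K containing p such that |B ∩ (t + K)| ≥ λ·|R ∩ (t + K)|. In particular, when red points are only required to be contained in (rather than be the centers of) their associated translates, no local-to-global lower bound on |B|/|R| holds. -/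
open Pointwise

set_option maxHeartbeats 1000000


noncomputable def mkE (a b : ℝ) : EuclideanSpace ℝ (Fin 2) :=
  (WithLp.equiv 2 (Fin 2 → ℝ)).symm ![a, b]

@[simp] lemma mkE_apply_zero (a b : ℝ) : mkE a b 0 = a := rfl
@[simp] lemma mkE_apply_one (a b : ℝ) : mkE a b 1 = b := rfl

lemma inner_mkE (a b c d : ℝ) : (inner ℝ (mkE a b) (mkE c d) : ℝ) = a * c + b * d := by
  rw [PiLp.inner_apply, Fin.sum_univ_two]
  simp [RCLike.inner_apply]
  ring

lemma stmt_10_main (K : Set (EuclideanSpace ℝ (Fin 2))) (hK₁ : IsCompact K)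
    (z : EuclideanSpace ℝ (Fin 2)) (hzK : z ∈ K) (ρ : ℝ) (hρ : 0 < ρ) (n : ℕ) :
    ∃ t p : ℕ → EuclideanSpace ℝ (Fin 2),
      (∀ k, k < n → p k ∈ K) ∧ (∀ k, k < n → ‖t k‖ ≤ ρ/2) ∧
      (∀ k l, k < n → l < n → k ≠ l → p l + t l - t k ∉ K) := by
  classical
  have hKne : K.Nonempty := ⟨z, hzK⟩
  have hex : ∀ i : ℕ, ∃ x, x ∈ K ∧ IsMaxOn (fun y => (inner ℝ (mkE 1 (i:ℝ)) y : ℝ)) K x := by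
    intro i
    have hc : Continuous fun y : EuclideanSpace ℝ (Fin 2) => (inner ℝ (mkE 1 (i:ℝ)) y : ℝ) :=
      continuous_const.inner continuous_id
    obtain ⟨x, hx, hmax⟩ := hK₁.exists_isMaxOn hKne hc.continuousOn
    exact ⟨x, hx, hmax⟩
  choose e heK hemax using hex
  by_cases hcor : ∃ i j, i < j ∧ j < n ∧ ∃ x ∈ K,
      IsMaxOn (fun y => (inner ℝ (mkE 1 (i:ℝ)) y : ℝ)) K x ∧
      IsMaxOn (fun y => (inner ℝ (mkE 1 (j:ℝ)) y : ℝ)) K x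
  · -- corner case
    obtain ⟨i, j, hij, hjn, x, hxK, hxi, hxj⟩ := hcor
    have hji : (0:ℝ) < (j:ℝ) - i := by
      have : (i:ℝ) < j := by exact_mod_cast hij
      linarith
    have hig₁ : (inner ℝ (mkE 1 (i:ℝ)) (mkE (-(i:ℝ)) 1) : ℝ) = 0 := by rw [inner_mkE]; ring
    have hjg₁ : (inner ℝ (mkE 1 (j:ℝ)) (mkE (-(i:ℝ)) 1) : ℝ) = (j:ℝ) - i := by
      rw [inner_mkE]; ring
    have hig₂ : (inner ℝ (mkE 1 (i:ℝ)) (mkE (j:ℝ) (-1)) : ℝ) = (j:ℝ) - i := by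
      rw [inner_mkE]; ring
    have hjg₂ : (inner ℝ (mkE 1 (j:ℝ)) (mkE (j:ℝ) (-1)) : ℝ) = 0 := by rw [inner_mkE]; ring
    have hg₁0 : mkE (-(i:ℝ)) 1 ≠ 0 := by
      intro h; rw [h, inner_zero_right] at hjg₁; linarith
    have hg₂0 : mkE (j:ℝ) (-1) ≠ 0 := by
      intro h; rw [h, inner_zero_right] at hig₂; linarith
    set u₁ : EuclideanSpace ℝ (Fin 2) := ‖mkE (-(i:ℝ)) 1‖⁻¹ • mkE (-(i:ℝ)) 1 with hu₁
    set u₂ : EuclideanSpace ℝ (Fin 2) := ‖mkE (j:ℝ) (-1)‖⁻¹ • mkE (j:ℝ) (-1) with hu₂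
    have hnu₁ : ‖u₁‖ = 1 := norm_smul_inv_norm hg₁0
    have hnu₂ : ‖u₂‖ = 1 := norm_smul_inv_norm hg₂0
    have hiu₁ : (inner ℝ (mkE 1 (i:ℝ)) u₁ : ℝ) = 0 := by
      rw [hu₁, real_inner_smul_right, hig₁]; ring
    have hju₁ : 0 < (inner ℝ (mkE 1 (j:ℝ)) u₁ : ℝ) := by
      rw [hu₁, real_inner_smul_right, hjg₁]
      have : 0 < ‖mkE (-(i:ℝ)) 1‖ := norm_pos_iff.mpr hg₁0
      positivity
    have hiu₂ : 0 < (inner ℝ (mkE 1 (i:ℝ)) u₂ : ℝ) := by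
      rw [hu₂, real_inner_smul_right, hig₂]
      have : 0 < ‖mkE (j:ℝ) (-1)‖ := norm_pos_iff.mpr hg₂0
      positivity
    have hju₂ : (inner ℝ (mkE 1 (j:ℝ)) u₂ : ℝ) = 0 := by
      rw [hu₂, real_inner_smul_right, hjg₂]; ring
    set δ : ℝ := ρ / (4 * (n + 1)) with hδ
    have hδpos : 0 < δ := by positivity
    refine ⟨fun k => (((n:ℝ) - k) * δ) • u₁ + ((k:ℝ) * δ) • u₂, fun _ => x,
      fun _ _ => hxK, ?_, ?_⟩
    · intro k hk
      have hk' : (k:ℝ) ≤ n := by exact_mod_cast hk.le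
      have hk0 : (0:ℝ) ≤ k := Nat.cast_nonneg k
      have hb : ‖(((n:ℝ) - k) * δ) • u₁ + ((k:ℝ) * δ) • u₂‖
          ≤ ((n:ℝ) - k) * δ + (k:ℝ) * δ := by
        have e₁ : ‖(((n:ℝ) - k) * δ) • u₁‖ = |((n:ℝ) - k) * δ| := by
          rw [norm_smul, hnu₁, Real.norm_eq_abs, mul_one]
        have e₂ : ‖((k:ℝ) * δ) • u₂‖ = |(k:ℝ) * δ| := by
          rw [norm_smul, hnu₂, Real.norm_eq_abs, mul_one]
        calc ‖(((n:ℝ) - k) * δ) • u₁ + ((k:ℝ) * δ) • u₂‖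
            ≤ ‖(((n:ℝ) - k) * δ) • u₁‖ + ‖((k:ℝ) * δ) • u₂‖ := norm_add_le _ _
          _ = |((n:ℝ) - k) * δ| + |(k:ℝ) * δ| := by rw [e₁, e₂]
          _ = ((n:ℝ) - k) * δ + (k:ℝ) * δ := by
              rw [abs_of_nonneg (by nlinarith), abs_of_nonneg (by nlinarith)]
      refine hb.trans ?_
      have : ((n:ℝ) - k) * δ + (k:ℝ) * δ = ((n:ℝ) * ρ) / (4 * (n + 1)) := by
        rw [hδ]; ring
      rw [this, div_le_div_iff₀ (by positivity) (by norm_num)]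
      nlinarith
    · intro k l hkn hln hkl hmem
      rcases lt_or_gt_of_ne hkl with h | h
      · have hval : (inner ℝ (mkE 1 (i:ℝ)) (x + ((((n:ℝ) - l) * δ) • u₁ + ((l:ℝ) * δ) • u₂)
            - ((((n:ℝ) - k) * δ) • u₁ + ((k:ℝ) * δ) • u₂)) : ℝ)
            = (inner ℝ (mkE 1 (i:ℝ)) x : ℝ)
              + (((l:ℝ) - k) * δ) * (inner ℝ (mkE 1 (i:ℝ)) u₂ : ℝ) := by
          simp only [inner_add_right, inner_sub_right, real_inner_smul_right, hiu₁]
          ring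
        have hle := isMaxOn_iff.mp hxi _ hmem
        rw [hval] at hle
        have hlk : (0:ℝ) < (l:ℝ) - k := by
          have : (k:ℝ) < l := by exact_mod_cast h
          linarith
        have := mul_pos (mul_pos hlk hδpos) hiu₂
        linarith
      · have hval : (inner ℝ (mkE 1 (j:ℝ)) (x + ((((n:ℝ) - l) * δ) • u₁ + ((l:ℝ) * δ) • u₂)
            - ((((n:ℝ) - k) * δ) • u₁ + ((k:ℝ) * δ) • u₂)) : ℝ)
            = (inner ℝ (mkE 1 (j:ℝ)) x : ℝ)
              + (((k:ℝ) - l) * δ) * (inner ℝ (mkE 1 (j:ℝ)) u₁ : ℝ) := by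
          simp only [inner_add_right, inner_sub_right, real_inner_smul_right, hju₂]
          ring
        have hle := isMaxOn_iff.mp hxj _ hmem
        rw [hval] at hle
        have hlk : (0:ℝ) < (k:ℝ) - l := by
          have : (l:ℝ) < k := by exact_mod_cast h
          linarith
        have := mul_pos (mul_pos hlk hδpos) hju₁
        linarith
  · -- separated case
    obtain ⟨D, hD⟩ := hK₁.isBounded.subset_closedBall z
    have hD0 : 0 ≤ D := by
      have := hD hzK
      simpa using this
    set s : ℝ := ρ / (2 * (D + 1)) with hs
    have hspos : 0 < s := by positivity
    have hstrict : ∀ k l, k < n → l < n → k ≠ l →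
        (inner ℝ (mkE 1 (l:ℝ)) (e k) : ℝ) < (inner ℝ (mkE 1 (l:ℝ)) (e l) : ℝ) := by
      intro k l hkn hln hkl
      by_contra hge
      push_neg at hge
      have heq : (inner ℝ (mkE 1 (l:ℝ)) (e k) : ℝ) = (inner ℝ (mkE 1 (l:ℝ)) (e l) : ℝ) :=
        le_antisymm (isMaxOn_iff.mp (hemax l) _ (heK k)) hge
      have hmaxl : IsMaxOn (fun y => (inner ℝ (mkE 1 (l:ℝ)) y : ℝ)) K (e k) := by
        rw [isMaxOn_iff]
        intro y hy
        calc (inner ℝ (mkE 1 (l:ℝ)) y : ℝ) ≤ inner ℝ (mkE 1 (l:ℝ)) (e l) :=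
              isMaxOn_iff.mp (hemax l) y hy
          _ = inner ℝ (mkE 1 (l:ℝ)) (e k) := heq.symm
      rcases lt_or_gt_of_ne hkl with h | h
      · exact hcor ⟨k, l, h, hln, e k, heK k, hemax k, hmaxl⟩
      · exact hcor ⟨l, k, h, hkn, e k, heK k, hmaxl, hemax k⟩
    refine ⟨fun k => s • (e k - z), e, fun k _ => heK k, ?_, ?_⟩
    · intro k hk
      have hek : ‖e k - z‖ ≤ D := by
        have := hD (heK k)
        rwa [Metric.mem_closedBall, dist_eq_norm] at this
      rw [norm_smul, Real.norm_eq_abs, abs_of_pos hspos]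
      have h1 : s * ‖e k - z‖ ≤ s * D := by
        have := norm_nonneg (e k - z)
        nlinarith
      refine h1.trans ?_
      have : s * D = (ρ * D) / (2 * (D + 1)) := by rw [hs]; ring
      rw [this, div_le_div_iff₀ (by positivity) (by norm_num)]
      nlinarith
    · intro k l hkn hln hkl hmem
      have hval : (inner ℝ (mkE 1 (l:ℝ)) (e l + s • (e l - z) - s • (e k - z)) : ℝ)
          = (inner ℝ (mkE 1 (l:ℝ)) (e l) : ℝ)
            + s * ((inner ℝ (mkE 1 (l:ℝ)) (e l) : ℝ) - (inner ℝ (mkE 1 (l:ℝ)) (e k) : ℝ)) := by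
        simp only [inner_add_right, inner_sub_right, real_inner_smul_right]
        ring
      have hle := isMaxOn_iff.mp (hemax l) _ hmem
      rw [hval] at hle
      have := hstrict k l hkn hln hkl
      nlinarith

lemma norm_mkE10 : ‖mkE 1 0‖ = 1 := by
  simp [EuclideanSpace.norm_eq, Fin.sum_univ_two]

/-- If red points are only required to lie in (not to be the centers of) their
associated translates of a convex body `K`, no local-to-global bound holds:
for any `ε, λ > 0` there are finite nonempty sets `R`, `B` with `|B| < ε * |R|`
while each `p ∈ R` lies in a translate of `K` in which the blue points number
at least `λ` times the red points. -/
theorem stmt_10 (K : Set (EuclideanSpace ℝ (Fin 2))) (hK₁ : IsCompact K)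
    (hK₂ : Convex ℝ K) (hK₃ : (interior K).Nonempty)
    (ε lam : ℝ) (hε : 0 < ε) (hlam : 0 < lam) :
    ∃ R B : Set (EuclideanSpace ℝ (Fin 2)),
      R.Finite ∧ R.Nonempty ∧ B.Finite ∧ B.Nonempty ∧
      (B.ncard : ℝ) < ε * R.ncard ∧
      ∀ p ∈ R, ∃ t : EuclideanSpace ℝ (Fin 2),
        p ∈ t +ᵥ K ∧
        lam * ((R ∩ (t +ᵥ K)).ncard : ℝ) ≤ ((B ∩ (t +ᵥ K)).ncard : ℝ) := by
  classical
  -- interior ball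
  obtain ⟨z, hz⟩ := hK₃
  have hzK : z ∈ K := interior_subset hz
  obtain ⟨ρ₀, hρ₀, hball⟩ := Metric.mem_nhds_iff.mp (mem_interior_iff_mem_nhds.mp hz)
  set ρ : ℝ := ρ₀ / 2 with hρdef
  have hρ : 0 < ρ := by positivity
  have hcb : Metric.closedBall z ρ ⊆ K :=
    (Metric.closedBall_subset_ball (by rw [hρdef]; linarith)).trans hball
  -- cardinalities
  set m : ℕ := max 1 ⌈lam⌉₊ with hmdef
  set n : ℕ := ⌈(m:ℝ)/ε⌉₊ + 1 with hndef
  have hm1 : 1 ≤ m := le_max_left _ _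
  have hmR : (0:ℝ) < m := by exact_mod_cast hm1
  have hn1 : 1 ≤ n := Nat.le_add_left 1 _
  have hlamm : lam ≤ (m:ℝ) := by
    calc lam ≤ (⌈lam⌉₊ : ℝ) := Nat.le_ceil lam
      _ ≤ (m:ℝ) := by exact_mod_cast le_max_right 1 ⌈lam⌉₊
  have hmn : (m:ℝ) < ε * n := by
    have h1 : (m:ℝ)/ε ≤ (⌈(m:ℝ)/ε⌉₊ : ℝ) := Nat.le_ceil _
    have h2 : ((⌈(m:ℝ)/ε⌉₊ : ℝ)) < n := by
      rw [hndef]; push_cast; linarith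
    have h3 : (m:ℝ)/ε < n := lt_of_le_of_lt h1 h2
    rw [div_lt_iff₀ hε] at h3
    linarith [h3]
  -- construction data
  obtain ⟨t, p, hpK, htn, hexcl⟩ := stmt_10_main K hK₁ z hzK ρ hρ n
  -- red points
  set r : ℕ → EuclideanSpace ℝ (Fin 2) := fun k => p k + t k with hrdef
  -- blue points
  set v : EuclideanSpace ℝ (Fin 2) := mkE 1 0 with hvdef
  have hv : ‖v‖ = 1 := norm_mkE10
  have hv0 : v ≠ 0 := by
    intro h; rw [h, norm_zero] at hv; norm_num at hv
  set σ : ℝ := ρ / (4 * m) with hσdef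
  have hσ : 0 < σ := by positivity
  set b : ℕ → EuclideanSpace ℝ (Fin 2) := fun k => z + (((k:ℝ) + 1) * σ) • v with hbdef
  -- windows
  have hwin : ∀ (u x : EuclideanSpace ℝ (Fin 2)), x ∈ u +ᵥ K ↔ x - u ∈ K := by
    intro u x
    rw [Set.mem_vadd_set_iff_neg_vadd_mem, vadd_eq_add, neg_add_eq_sub]
  have hrW : ∀ k, k < n → r k ∈ t k +ᵥ K := by
    intro k hk
    rw [hwin]
    simpa [hrdef] using hpK k hk
  have hbW : ∀ k', k' < m → ∀ k, k < n → b k' ∈ t k +ᵥ K := by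
    intro k' hk' k hk
    rw [hwin]
    apply hcb
    rw [Metric.mem_closedBall, dist_eq_norm]
    have h1 : b k' - t k - z = (((k':ℝ) + 1) * σ) • v - t k := by
      show z + (((k':ℝ) + 1) * σ) • v - t k - z = _
      rw [sub_right_comm, add_sub_cancel_left]
    rw [h1]
    have h2 : ‖(((k':ℝ) + 1) * σ) • v - t k‖ ≤ ‖(((k':ℝ) + 1) * σ) • v‖ + ‖t k‖ :=
      norm_sub_le _ _
    have h3 : ‖(((k':ℝ) + 1) * σ) • v‖ = ((k':ℝ) + 1) * σ := by
      rw [norm_smul, hv, mul_one, Real.norm_eq_abs, abs_of_pos (by positivity)]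
    have h4 : ((k':ℝ) + 1) * σ ≤ ρ / 2 := by
      have hk'm : (k':ℝ) + 1 ≤ m := by exact_mod_cast hk'
      have : ((k':ℝ) + 1) * σ ≤ (m:ℝ) * σ := by nlinarith
      refine this.trans ?_
      rw [hσdef]
      rw [mul_div_assoc']
      rw [div_le_div_iff₀ (by positivity) (by norm_num)]
      nlinarith
    have h5 := htn k hk
    calc ‖(((k':ℝ) + 1) * σ) • v - t k‖ ≤ ‖(((k':ℝ) + 1) * σ) • v‖ + ‖t k‖ := h2
      _ = ((k':ℝ) + 1) * σ + ‖t k‖ := by rw [h3]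
      _ ≤ ρ / 2 + ρ / 2 := by linarith
      _ = ρ := by ring
  -- injectivity
  have hrinj : Set.InjOn r ↑(Finset.range n) := by
    intro a ha a' ha' hraa
    simp only [Finset.coe_range, Set.mem_Iio] at ha ha'
    by_contra hne
    have h1 := hrW a ha
    rw [hraa, hwin] at h1
    exact hexcl a a' ha ha' hne h1
  have hbinj : Set.InjOn b ↑(Finset.range m) := by
    intro a ha a' ha' hbaa
    have h1 : (((a:ℝ) + 1) * σ) • v = (((a':ℝ) + 1) * σ) • v := by
      have := hbaa
      rw [hbdef] at this
      simpa using this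
    have h2 : ((a:ℝ) + 1) * σ = ((a':ℝ) + 1) * σ := by
      by_contra hne
      have := sub_smul (((a:ℝ) + 1) * σ) (((a':ℝ) + 1) * σ) v
      rw [h1, sub_self] at this
      rcases smul_eq_zero.mp this with h | h
      · exact hne (by linarith [sub_eq_zero.mp h])
      · exact hv0 h
    have : (a:ℝ) = a' := by
      have := mul_right_cancel₀ (ne_of_gt hσ) h2
      linarith
    exact_mod_cast this
  -- the sets
  set RF : Finset (EuclideanSpace ℝ (Fin 2)) := (Finset.range n).image r with hRF
  set BF : Finset (EuclideanSpace ℝ (Fin 2)) := (Finset.range m).image b with hBF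
  have hRcard : RF.card = n := by
    rw [hRF, Finset.card_image_of_injOn hrinj, Finset.card_range]
  have hBcard : BF.card = m := by
    rw [hBF, Finset.card_image_of_injOn hbinj, Finset.card_range]
  refine ⟨↑RF, ↑BF, RF.finite_toSet, ?_, BF.finite_toSet, ?_, ?_, ?_⟩
  · exact ⟨r 0, by
      rw [Finset.mem_coe, hRF, Finset.mem_image]
      exact ⟨0, Finset.mem_range.mpr (by omega), rfl⟩⟩
  · exact ⟨b 0, by
      rw [Finset.mem_coe, hBF, Finset.mem_image]
      exact ⟨0, Finset.mem_range.mpr (by omega), rfl⟩⟩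
  · rw [Set.ncard_coe_finset, Set.ncard_coe_finset, hRcard, hBcard]
    exact hmn
  · intro q hq
    rw [Finset.mem_coe, hRF, Finset.mem_image] at hq
    obtain ⟨k, hk, rfl⟩ := hq
    rw [Finset.mem_range] at hk
    refine ⟨t k, hrW k hk, ?_⟩
    have hRint : (↑RF : Set (EuclideanSpace ℝ (Fin 2))) ∩ (t k +ᵥ K) = {r k} := by
      ext x
      constructor
      · rintro ⟨hxR, hxW⟩
        rw [Finset.mem_coe, hRF, Finset.mem_image] at hxR
        obtain ⟨l, hl, rfl⟩ := hxR
        rw [Finset.mem_range] at hl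
        by_cases hlk : l = k
        · rw [hlk]; rfl
        · exfalso
          rw [hwin] at hxW
          exact hexcl k l hk hl (fun h => hlk h.symm) hxW
      · rintro rfl
        exact ⟨by
          rw [Finset.mem_coe, hRF, Finset.mem_image]
          exact ⟨k, Finset.mem_range.mpr hk, rfl⟩, hrW k hk⟩
    have hBint : (↑BF : Set (EuclideanSpace ℝ (Fin 2))) ∩ (t k +ᵥ K) = ↑BF := by
      apply Set.inter_eq_left.mpr
      intro x hx
      rw [Finset.mem_coe, hBF, Finset.mem_image] at hx
      obtain ⟨k', hk', rfl⟩ := hx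
      rw [Finset.mem_range] at hk'
      exact hbW k' hk' k hk
    rw [hRint, hBint, Set.ncard_singleton, Set.ncard_coe_finset, hBcard]
    simpa using hlamm
end

section
/- Let b be a point of the Euclidean plane ℝ² and let p_1, …, p_6 be six points of ℝ², indexed by distinct indices, all different from b. Then there exist indices i ≠ j such that the angle ∠(p_i, b, p_j) at vertex b is at most π/3. -/
open Real

private lemma abs_toReal_coe_le' (x : ℝ) : |((x : Real.Angle)).toReal| ≤ |x| := by
  set t := ((x : Real.Angle)).toReal with ht
  have hc : (t : Real.Angle) = (x : Real.Angle) := Real.Angle.coe_toReal _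
  obtain ⟨k, hk⟩ := Real.Angle.angle_eq_iff_two_pi_dvd_sub.mp hc
  have htpi : |t| ≤ π := Real.Angle.abs_toReal_le_pi _
  rcases eq_or_ne k 0 with h0 | h0
  · have : t = x := by rw [h0] at hk; push_cast at hk; linarith
    rw [this]
  · have hk1 : (1:ℝ) ≤ |(k:ℝ)| := by exact_mod_cast Int.one_le_abs h0
    have hx : x = t - 2*π*k := by linarith
    have h2 : |2*π*(k:ℝ)| = 2*π*|(k:ℝ)| := by
      rw [abs_mul]
      rw [abs_of_pos (by positivity : (0:ℝ) < 2*π)]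
    have h3 : |x| ≥ |2*π*(k:ℝ)| - |t| := by
      rw [hx, abs_sub_comm]
      exact abs_sub_abs_le_abs_sub (2*π*(k:ℝ)) t
    have hpi := Real.pi_pos
    nlinarith [htpi, hk1, h2, h3]

/-- Among six points of the plane (indexed by distinct indices), all different
from `b`, two of them make an angle at most `π/3` at the vertex `b`. -/
theorem stmt_13 (b : EuclideanSpace ℝ (Fin 2))
    (p : Fin 6 → EuclideanSpace ℝ (Fin 2)) (hp : ∀ i, p i ≠ b) :
    ∃ i j, i ≠ j ∧ EuclideanGeometry.angle (p i) b (p j) ≤ π / 3 := by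
  haveI : Fact (Module.finrank ℝ (EuclideanSpace ℝ (Fin 2)) = 2) :=
    ⟨finrank_euclideanSpace_fin⟩
  set o : Orientation ℝ (EuclideanSpace ℝ (Fin 2)) (Fin 2) :=
    (EuclideanSpace.basisFun (Fin 2) ℝ).toBasis.orientation with ho
  set v : Fin 6 → EuclideanSpace ℝ (Fin 2) := fun i => p i -ᵥ b with hv
  have hvne : ∀ i, v i ≠ 0 := fun i => vsub_ne_zero.2 (hp i)
  set θ : Fin 6 → ℝ := fun i => (o.oangle (v 0) (v i)).toReal with hθ
  have hθpi : ∀ i, θ i ∈ Set.Ioc (-π) π := fun i => Real.Angle.toReal_mem_Ioc _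
  have key : ∀ i j, EuclideanGeometry.angle (p i) b (p j)
      = |(((θ j - θ i : ℝ) : Real.Angle)).toReal| := by
    intro i j
    have h1 : EuclideanGeometry.angle (p i) b (p j)
        = |(o.oangle (v i) (v j)).toReal| :=
      o.angle_eq_abs_oangle_toReal (hvne i) (hvne j)
    have hθdef : ∀ m : Fin 6, ((θ m : ℝ) : Real.Angle) = o.oangle (v 0) (v m) :=
      fun m => Real.Angle.coe_toReal _
    have h2 : o.oangle (v i) (v j) = ((θ j - θ i : ℝ) : Real.Angle) := by
      rw [Real.Angle.coe_sub, hθdef i, hθdef j,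
        o.oangle_sub_left (hvne 0) (hvne i) (hvne j)]
    rw [h1, h2]
  -- sort
  set σ := Tuple.sort θ with hσ
  have hmono : Monotone (θ ∘ σ) := Tuple.monotone_sort θ
  by_contra hcon
  push_neg at hcon
  have hgap : ∀ k : Fin 5, π/3 < θ (σ k.succ) - θ (σ k.castSucc) := by
    intro k
    have hne : σ k.castSucc ≠ σ k.succ :=
      fun h => (Fin.castSucc_lt_succ : k.castSucc < k.succ).ne (σ.injective h)
    have hle : θ (σ k.castSucc) ≤ θ (σ k.succ) := hmono (Fin.castSucc_lt_succ : k.castSucc < k.succ).le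
    have := hcon (σ k.castSucc) (σ k.succ) hne
    rw [key] at this
    calc π/3 < |(((θ (σ k.succ) - θ (σ k.castSucc) : ℝ) : Real.Angle)).toReal| := this
      _ ≤ |θ (σ k.succ) - θ (σ k.castSucc)| := abs_toReal_coe_le' _
      _ = θ (σ k.succ) - θ (σ k.castSucc) := abs_of_nonneg (by linarith)
  have hwrap : π/3 < 2*π - (θ (σ 5) - θ (σ 0)) := by
    have hne : σ 0 ≠ σ 5 := fun h => (by decide : (0 : Fin 6) ≠ 5) (σ.injective h)
    have := hcon (σ 0) (σ 5) hne
    rw [key] at this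
    have h05 : θ (σ 5) - θ (σ 0) ≤ 2*π := by
      have h1 := (hθpi (σ 5)).2
      have h2 := (hθpi (σ 0)).1
      linarith
    have hco : (((θ (σ 5) - θ (σ 0) : ℝ) : Real.Angle))
        = (((θ (σ 5) - θ (σ 0) - 2*π : ℝ) : Real.Angle)) := by
      rw [Real.Angle.angle_eq_iff_two_pi_dvd_sub]
      exact ⟨1, by push_cast; ring⟩
    rw [hco] at this
    calc π/3 < |(((θ (σ 5) - θ (σ 0) - 2*π : ℝ) : Real.Angle)).toReal| := this
      _ ≤ |θ (σ 5) - θ (σ 0) - 2*π| := abs_toReal_coe_le' _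
      _ = 2*π - (θ (σ 5) - θ (σ 0)) := by rw [abs_sub_comm]; exact abs_of_nonneg (by linarith)
  have h0 := hgap 0
  have h1 := hgap 1
  have h2 := hgap 2
  have h3 := hgap 3
  have h4 := hgap 4
  have e0 : (0 : Fin 5).succ = (1 : Fin 6) := rfl
  have e0' : (0 : Fin 5).castSucc = (0 : Fin 6) := rfl
  have e1 : (1 : Fin 5).succ = (2 : Fin 6) := rfl
  have e1' : (1 : Fin 5).castSucc = (1 : Fin 6) := rfl
  have e2 : (2 : Fin 5).succ = (3 : Fin 6) := rfl
  have e2' : (2 : Fin 5).castSucc = (2 : Fin 6) := rfl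
  have e3 : (3 : Fin 5).succ = (4 : Fin 6) := rfl
  have e3' : (3 : Fin 5).castSucc = (3 : Fin 6) := rfl
  have e4 : (4 : Fin 5).succ = (5 : Fin 6) := rfl
  have e4' : (4 : Fin 5).castSucc = (4 : Fin 6) := rfl
  rw [e0, e0'] at h0
  rw [e1, e1'] at h1
  rw [e2, e2'] at h2
  rw [e3, e3'] at h3
  rw [e4, e4'] at h4
  linarith
end
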